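/- Suppose the circle family C_{(γ,λ)} creates an envelope. If the set {t ∈ I : β(t) ≠ 0 and λ'(t) = ±β(t)} is dense in I, then the envelope is unique: any two envelopes f₁, f₂ of the family coincide. -/

import Mathlib

noncomputable section

/-- The Euclidean plane. -/
abbrev Plane := EuclideanSpace ℝ (Fin 2)

/-- The standard scalar (dot) product on the plane. -/
def dotp (x y : Plane) : ℝ := inner ℝ x y

/-- The vector with coordinates `a`, `b`. -/
def vec2 (a b : ℝ) : Plane := (WithLp.equiv 2 (Fin 2 → ℝ)).symm ![a, b]

/-- Anti-clockwise rotation by π/2. -/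
def rotJ (v : Plane) : Plane := vec2 (-(v 1)) (v 0)

/-- `f` is an envelope of the circle family with center curve `γ` and radius
function `r`, on the parameter set `I`. -/
def IsEnvelope (I : Set ℝ) (γ : ℝ → Plane) (r : ℝ → ℝ) (f : ℝ → Plane) : Prop :=
  ContDiffOn ℝ (⊤ : ℕ∞) f I ∧
    ∀ t ∈ I, ‖f t - γ t‖ = r t ∧ dotp (deriv f t) (f t - γ t) = 0

lemma dotp_eq (x y : Plane) : dotp x y = x 0 * y 0 + x 1 * y 1 := by
  simp [dotp, PiLp.inner_apply, Fin.sum_univ_two, RCLike.inner_apply]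
  ring

lemma rotJ0 (v : Plane) : rotJ v 0 = -(v 1) := by simp [rotJ, vec2]
lemma rotJ1 (v : Plane) : rotJ v 1 = v 0 := by simp [rotJ, vec2]

set_option maxHeartbeats 1000000 in
lemma envelope_eq_at (I : Set ℝ) (hIopen : IsOpen I) (γ ν : ℝ → Plane) (r : ℝ → ℝ)
    (hγ : ContDiffOn ℝ (⊤ : ℕ∞) γ I)
    (hνunit : ∀ t ∈ I, ‖ν t‖ = 1)
    (hfrontal : ∀ t ∈ I, dotp (deriv γ t) (ν t) = 0)
    (hr : ContDiffOn ℝ (⊤ : ℕ∞) r I)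
    (f : ℝ → Plane) (hf : IsEnvelope I γ r f) (t : ℝ) (ht : t ∈ I)
    (hβ : dotp (deriv γ t) (rotJ (ν t)) ≠ 0)
    (hpm : deriv r t = dotp (deriv γ t) (rotJ (ν t)) ∨
       deriv r t = -(dotp (deriv γ t) (rotJ (ν t)))) :
    f t = γ t - ((deriv r t / dotp (deriv γ t) (rotJ (ν t))) * r t) • rotJ (ν t) := by
  obtain ⟨hfsm, hfen⟩ := hf
  have htn : I ∈ nhds t := hIopen.mem_nhds ht
  have hfd : HasDerivAt f (deriv f t) t :=
    ((hfsm.contDiffAt htn).differentiableAt (by simp)).hasDerivAt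
  have hγd : HasDerivAt γ (deriv γ t) t :=
    ((hγ.contDiffAt htn).differentiableAt (by simp)).hasDerivAt
  have hrd : HasDerivAt r (deriv r t) t :=
    ((hr.contDiffAt htn).differentiableAt (by simp)).hasDerivAt
  have hwd : HasDerivAt (fun s => f s - γ s) (deriv f t - deriv γ t) t := hfd.sub hγd
  set w : Plane := f t - γ t with hw
  set w' : Plane := deriv f t - deriv γ t with hw'
  have hφd : HasDerivAt (fun s => (inner ℝ (f s - γ s) (f s - γ s) : ℝ) - (r s)^2)
      ((inner ℝ w w' : ℝ) + (inner ℝ w' w : ℝ) - 2 * r t * deriv r t) t := by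
    have h1 := (hwd.inner ℝ hwd)
    have h2 := hrd.pow 2
    refine (h1.sub h2).congr_deriv ?_
    rw [hw]; norm_num
  have hφ0 : (fun s => (inner ℝ (f s - γ s) (f s - γ s) : ℝ) - (r s)^2) =ᶠ[nhds t]
      (fun _ => (0:ℝ)) := by
    filter_upwards [htn] with s hs
    have := (hfen s hs).1
    rw [real_inner_self_eq_norm_sq, this]; ring
  have hD : (inner ℝ w w' : ℝ) + (inner ℝ w' w : ℝ) - 2 * r t * deriv r t = 0 := by
    have := hφd.deriv
    rw [hφ0.deriv_eq, deriv_const] at this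
    linarith [this.symm]
  -- envelope orthogonality
  have horth : dotp (deriv f t) w = 0 := (hfen t ht).2
  -- scalar reductions
  have hE4 : dotp (deriv γ t) w = -(r t * deriv r t) := by
    have hsymm : (inner ℝ w w' : ℝ) = (inner ℝ w' w : ℝ) := real_inner_comm _ _
    have : (inner ℝ w' w : ℝ) = r t * deriv r t := by linarith [hD, hsymm]
    have hsub : (inner ℝ w' w : ℝ) = dotp (deriv f t) w - dotp (deriv γ t) w := by
      simp [hw', dotp, inner_sub_left]
    rw [hsub, horth] at this
    linarith
  -- coordinates
  set n0 := ν t 0; set n1 := ν t 1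
  set g0 := deriv γ t 0; set g1 := deriv γ t 1
  set w0 := w 0; set w1 := w 1
  have hE1 : n0^2 + n1^2 = 1 := by
    have h := hνunit t ht
    have : dotp (ν t) (ν t) = 1 := by rw [dotp, real_inner_self_eq_norm_sq, h]; norm_num
    rw [dotp_eq] at this; nlinarith [this]
  have hE2 : g0 * n0 + g1 * n1 = 0 := by
    have := hfrontal t ht; rwa [dotp_eq] at this
  have hE3 : w0^2 + w1^2 = (r t)^2 := by
    have h := (hfen t ht).1
    have : dotp w w = (r t)^2 := by rw [dotp, real_inner_self_eq_norm_sq, h]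
    rw [dotp_eq] at this; nlinarith [this]
  have hE4' : g0 * w0 + g1 * w1 = -(r t * deriv r t) := by
    rw [dotp_eq] at hE4; linarith [hE4]
  have hβ' : g0 * (-(n1)) + g1 * n0 ≠ 0 := by
    rw [dotp_eq, rotJ0, rotJ1] at hβ; exact hβ
  set β := g0 * (-(n1)) + g1 * n0 with hβdef
  have hβeq : dotp (deriv γ t) (rotJ (ν t)) = β := by rw [dotp_eq, rotJ0, rotJ1]
  have hg0 : g0 = -(β * n1) := by
    rw [hβdef]; linear_combination n0 * hE2 - g0 * hE1
  have hg1 : g1 = β * n0 := by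
    rw [hβdef]; linear_combination n1 * hE2 - g1 * hE1
  -- b = w·μ
  have hb : (-(w0 * n1) + w1 * n0) * β = -(r t * deriv r t) := by
    rw [hg0, hg1] at hE4'; linarith [hE4']
  rw [hβeq] at hpm ⊢
  have hbval : (-(w0 * n1) + w1 * n0) = -(deriv r t / β * r t) := by
    have h1 : (-(w0 * n1) + w1 * n0) = -(r t * deriv r t) / β := by
      rw [eq_div_iff hβ']; exact hb
    rw [h1]; ring
  have hbpm : (-(w0 * n1) + w1 * n0) = -(r t) ∨ (-(w0 * n1) + w1 * n0) = r t := by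
    rcases hpm with h | h
    · left
      apply mul_right_cancel₀ hβ'
      rw [hb, h]; ring
    · right
      apply mul_right_cancel₀ hβ'
      rw [hb, h]; ring
  have ha : (w0 * n0 + w1 * n1) = 0 := by
    have hb2 : (-(w0 * n1) + w1 * n0)^2 = (r t)^2 := by
      rcases hbpm with h | h <;> rw [h] <;> ring
    nlinarith [hE1, hE3, hb2]
  -- conclude componentwise
  have hw0 : w0 = -(deriv r t / β * r t) * (-(n1)) := by
    linear_combination n0 * ha - n1 * hbval - w0 * hE1
  have hw1 : w1 = -(deriv r t / β * r t) * n0 := by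
    linear_combination n1 * ha + n0 * hbval - w1 * hE1
  have : f t - γ t = (-(deriv r t / β * r t)) • rotJ (ν t) := by
    ext i
    fin_cases i
    · simpa [rotJ0, w0, w, n1] using hw0
    · simpa [rotJ1, w1, w, n0] using hw1
  have h2 := eq_add_of_sub_eq this
  rw [h2, neg_smul]; abel

theorem unique_envelope (I : Set ℝ) (hIopen : IsOpen I) (hIconn : I.OrdConnected)
    (γ ν : ℝ → Plane) (r : ℝ → ℝ)
    (hγ : ContDiffOn ℝ (⊤ : ℕ∞) γ I) (hν : ContDiffOn ℝ (⊤ : ℕ∞) ν I)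
    (hνunit : ∀ t ∈ I, ‖ν t‖ = 1)
    (hfrontal : ∀ t ∈ I, dotp (deriv γ t) (ν t) = 0)
    (hr : ContDiffOn ℝ (⊤ : ℕ∞) r I) (hrpos : ∀ t ∈ I, 0 < r t)
    (hex : ∃ f : ℝ → Plane, IsEnvelope I γ r f)
    (hdense : ∀ s ∈ I, s ∈ closure {t ∈ I |
      dotp (deriv γ t) (rotJ (ν t)) ≠ 0 ∧
      (deriv r t = dotp (deriv γ t) (rotJ (ν t)) ∨
       deriv r t = -(dotp (deriv γ t) (rotJ (ν t))))}) :
    ∀ f₁ f₂ : ℝ → Plane, IsEnvelope I γ r f₁ → IsEnvelope I γ r f₂ →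
      Set.EqOn f₁ f₂ I := by
  intro f₁ f₂ h1 h2 t ht
  set S := {t ∈ I | dotp (deriv γ t) (rotJ (ν t)) ≠ 0 ∧
      (deriv r t = dotp (deriv γ t) (rotJ (ν t)) ∨
       deriv r t = -(dotp (deriv γ t) (rotJ (ν t))))} with hSdef
  have hSeq : Set.EqOn f₁ f₂ S := by
    intro s hs
    obtain ⟨hsI, hβ, hpm⟩ := hs
    rw [envelope_eq_at I hIopen γ ν r hγ hνunit hfrontal hr f₁ h1 s hsI hβ hpm,
        envelope_eq_at I hIopen γ ν r hγ hνunit hfrontal hr f₂ h2 s hsI hβ hpm]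
  have htc : t ∈ closure S := hdense t ht
  haveI : (nhdsWithin t S).NeBot := mem_closure_iff_nhdsWithin_neBot.mp htc
  have hc1 : ContinuousAt f₁ t :=
    (h1.1.contDiffAt (hIopen.mem_nhds ht)).continuousAt
  have hc2 : ContinuousAt f₂ t :=
    (h2.1.contDiffAt (hIopen.mem_nhds ht)).continuousAt
  have T1 : Filter.Tendsto f₁ (nhdsWithin t S) (nhds (f₁ t)) :=
    hc1.tendsto.mono_left nhdsWithin_le_nhds
  have T2 : Filter.Tendsto f₁ (nhdsWithin t S) (nhds (f₂ t)) := by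
    apply (hc2.tendsto.mono_left nhdsWithin_le_nhds).congr'
    filter_upwards [self_mem_nhdsWithin] with s hs
    exact (hSeq hs).symm
  exact tendsto_nhds_unique T1 T2
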